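/- Let T = (V, E) be an infinite, locally finite tree with a distinguished root vertex o, with vertex degrees bounded above by some constant Δ. If T is non-amenable, then there exists a constant M such that for every v ∈ V, every connected component of the subgraph of T induced on (V \ T_r) ∪ {v} has at most M vertices (i.e., T satisfies condition (C1) with constant M). -/

import Mathlib

open SimpleGraph

variable {V : Type*}

/-- Reachability within a set `s`: there is a walk from `a` to `b` all of whose
vertices lie in `s` (i.e. reachability in the induced subgraph on `s`). -/
def ReachableWithin (G : SimpleGraph V) (s : Set V) : V → V → Prop :=
  Relation.ReflTransGen (fun x y => G.Adj x y ∧ x ∈ s ∧ y ∈ s)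

/-- The connected component of `u` in the subgraph of `G` induced on `s`. -/
def componentIn (G : SimpleGraph V) (s : Set V) (u : V) : Set V :=
  {w | w ∈ s ∧ ReachableWithin G s u w}

/-- The backbone of `G` relative to the vertex set `s`, rooted at `o`: vertices lying on
an infinite injective path starting at `o` all of whose vertices are in `s`. -/
def BackboneIn (G : SimpleGraph V) (s : Set V) (o : V) : Set V :=
  {v | ∃ f : ℕ → V, f 0 = o ∧ Function.Injective f ∧ (∀ n, f n ∈ s) ∧
    (∀ n, G.Adj (f n) (f (n + 1))) ∧ ∃ k, f k = v}

/-- The backbone `T_r` of `G` rooted at `o`: vertices lying on an infinite injective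
path starting at the root `o`. -/
def Backbone (G : SimpleGraph V) (o : V) : Set V :=
  BackboneIn G Set.univ o

/-- The edge boundary of a vertex set `S`: edges of `G` with exactly one endpoint in `S`. -/
def edgeBdry (G : SimpleGraph V) (S : Set V) : Set (Sym2 V) :=
  {e | ∃ a b : V, G.Adj a b ∧ e = s(a, b) ∧ a ∈ S ∧ b ∉ S}

/-- The degree of `u` in the subgraph of `G` induced on `s`. -/
noncomputable def degIn (G : SimpleGraph V) (s : Set V) (u : V) : ℕ :=
  (G.neighborSet u ∩ s).ncard

/-- Condition (C1) with constant `M`: for every vertex `v`, every connected component of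
the subgraph induced on `(V \ T_r) ∪ {v}` has at most `M` vertices. -/
def CondC1 (G : SimpleGraph V) (o : V) (M : ℕ) : Prop :=
  ∀ v u : V, u ∈ (Backbone G o)ᶜ ∪ {v} →
    (componentIn G ((Backbone G o)ᶜ ∪ {v}) u).ncard ≤ M

/-- Condition (C2) with constant `M`: there is no path `u 0, u 1, …, u M` in the subgraph
induced on the backbone `T_r` all of whose vertices have degree `2` in that subgraph. -/
def CondC2 (G : SimpleGraph V) (o : V) (M : ℕ) : Prop :=
  ¬ ∃ u : ℕ → V, (∀ j, j ≤ M → u j ∈ Backbone G o) ∧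
    (∀ j, j < M → G.Adj (u j) (u (j + 1))) ∧
    (∀ j k, j ≤ M → k ≤ M → u j = u k → j = k) ∧
    (∀ j, j ≤ M → degIn G (Backbone G o) (u j) = 2)

/-- Non-amenability: the edge boundary of every finite nonempty vertex set is at least a
fixed positive proportion of its size. -/
def NonAmenable (G : SimpleGraph V) : Prop :=
  ∃ c : ℝ, 0 < c ∧ ∀ S : Set V, S.Finite → S.Nonempty →
    c * (S.ncard : ℝ) ≤ ((edgeBdry G S).ncard : ℝ)

/-- `K` is connected in `G`: any two vertices of `K` are joined by a walk inside `K`. -/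
def ConnectedIn (G : SimpleGraph V) (K : Set V) : Prop :=
  ∀ a ∈ K, ∀ b ∈ K, ReachableWithin G K a b

/-- `|K|_D`: the sum over the vertices of the finite set `K` of their degrees in `G`. -/
noncomputable def degSumF (G : SimpleGraph V) (K : Finset V) : ℕ :=
  ∑ v ∈ K, (G.neighborSet v).ncard

/-- The edge-expansion constant `Φ_E(G)`. -/
noncomputable def expConst (G : SimpleGraph V) : ℝ :=
  sInf {x : ℝ | ∃ K : Finset V, K.Nonempty ∧ ConnectedIn G ↑K ∧
    x = ((edgeBdry G ↑K).ncard : ℝ) / (degSumF G K : ℝ)}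

/-!
The backbone `T_r` is connected, so a component `D` of `V \ T_r` has at most one boundary
edge: two boundary edges would both end in `T_r`, and joining them through `D` and through
`T_r` would give a cycle in the tree (that is, the edge would not be a bridge).
Non-amenability then gives `c ⋅ |D| ≤ 1` (an infinite `D` has `ncard = 0`, so needs no
bound). A component of `(V \ T_r) ∪ {v}` containing `v` consists of `v` and at most `Δ` such
components hanging off its neighbours; any other one is a component of `V \ T_r`.
-/

variable {G : SimpleGraph V}

namespace ReachableWithin

variable {s : Set V} {a b c : V}

lemma symm (h : ReachableWithin G s a b) : ReachableWithin G s b a := by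
  induction h with
  | refl => exact .refl
  | tail _ hxy ih => exact Relation.ReflTransGen.head ⟨hxy.1.symm, hxy.2.2, hxy.2.1⟩ ih

lemma trans (hab : ReachableWithin G s a b) (hbc : ReachableWithin G s b c) :
    ReachableWithin G s a c :=
  Relation.ReflTransGen.trans hab hbc

lemma mono {t : Set V} (hst : s ⊆ t) (h : ReachableWithin G s a b) : ReachableWithin G t a b :=
  Relation.ReflTransGen.mono (fun _ _ hxy => ⟨hxy.1, hst hxy.2.1, hst hxy.2.2⟩) _ _ h

lemma reachable_deleteEdges {e : Sym2 V} {z : V} (hz : z ∈ e) (hzs : z ∉ s)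
    (h : ReachableWithin G s a b) : (G.deleteEdges {e}).Reachable a b := by
  rw [reachable_iff_reflTransGen]
  refine Relation.ReflTransGen.mono (fun x y hxy => ?_) _ _ h
  refine deleteEdges_adj.mpr ⟨hxy.1, fun hxye => hzs ?_⟩
  rw [Set.mem_singleton_iff] at hxye
  rcases Sym2.mem_iff.mp (hxye ▸ hz) with rfl | rfl
  exacts [hxy.2.1, hxy.2.2]

end ReachableWithin

lemma reachableWithin_of_path {s : Set V} {f : ℕ → V} (hs : ∀ n, f n ∈ s)
    (hadj : ∀ n, G.Adj (f n) (f (n + 1))) (k : ℕ) : ReachableWithin G s (f 0) (f k) := by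
  induction k with
  | zero => exact .refl
  | succ k ih => exact ih.tail ⟨hadj k, hs k, hs (k + 1)⟩

lemma connectedIn_backbone (G : SimpleGraph V) (o : V) : ConnectedIn G (Backbone G o) := by
  have hroot : ∀ b ∈ Backbone G o, ReachableWithin G (Backbone G o) o b := by
    rintro _ ⟨f, rfl, hinj, -, hadj, k, rfl⟩
    exact reachableWithin_of_path (s := Backbone G (f 0))
      (fun n => ⟨f, rfl, hinj, fun _ => trivial, hadj, n, rfl⟩) hadj k
  exact fun a ha b hb => (hroot a ha).symm.trans (hroot b hb)

lemma mem_componentIn_self {s : Set V} {u : V} (hu : u ∈ s) : u ∈ componentIn G s u :=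
  ⟨hu, .refl⟩

lemma componentIn_eq_of_mem {s : Set V} {u w : V} (hw : w ∈ componentIn G s u) :
    componentIn G s w = componentIn G s u := by
  ext x
  exact ⟨fun hx => ⟨hx.1, hw.2.trans hx.2⟩, fun hx => ⟨hx.1, hw.2.symm.trans hx.2⟩⟩

lemma componentIn_union_singleton_of_notMem {t : Set V} {u v : V}
    (hv : v ∉ componentIn G (t ∪ {v}) u) :
    componentIn G (t ∪ {v}) u = componentIn G t u := by
  have hmem_t : ∀ w ∈ componentIn G (t ∪ {v}) u, w ∈ t := fun w hw =>
    hw.1.resolve_right fun hwv => hv (Set.mem_singleton_iff.mp hwv ▸ hw)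
  refine subset_antisymm (fun w hw => ⟨hmem_t w hw, ?_⟩)
    fun w hw => ⟨Or.inl hw.1, hw.2.mono Set.subset_union_left⟩
  obtain ⟨-, hreach⟩ := hw
  induction hreach with
  | refl => exact .refl
  | @tail x y hux hxy ih =>
    exact ih.tail
      ⟨hxy.1, hmem_t x ⟨hxy.2.1, hux⟩, hmem_t y ⟨hxy.2.2, hux.tail hxy⟩⟩

lemma componentIn_union_singleton_self (t : Set V) (v : V) :
    componentIn G (t ∪ {v}) v = {v} ∪ ⋃ x ∈ G.neighborSet v ∩ t, componentIn G t x := by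
  have hv : v ∈ t ∪ {v} := Or.inr rfl
  refine subset_antisymm ?_ (Set.union_subset ?_ ?_)
  · rintro w ⟨-, hreach⟩
    induction hreach with
    | refl => exact Or.inl rfl
    | @tail x y _ hxy ih =>
      by_cases hyv : y = v
      · exact Or.inl hyv
      have hy : y ∈ t := hxy.2.2.resolve_right hyv
      refine Or.inr (Set.mem_iUnion₂.mpr ?_)
      rcases ih with rfl | hx
      · exact ⟨y, ⟨hxy.1, hy⟩, mem_componentIn_self hy⟩
      obtain ⟨z, hz, hxz⟩ := Set.mem_iUnion₂.mp hx
      exact ⟨z, hz, hy, hxz.2.tail ⟨hxy.1, hxz.1, hy⟩⟩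
  · exact Set.singleton_subset_iff.mpr (mem_componentIn_self hv)
  · refine Set.iUnion₂_subset fun x hx w hw => ⟨Or.inl hw.1, ?_⟩
    exact Relation.ReflTransGen.head ⟨hx.1, hv, Or.inl hx.2⟩ (hw.2.mono Set.subset_union_left)

lemma SimpleGraph.IsAcyclic.edgeBdry_componentIn_compl_subsingleton (hG : G.IsAcyclic)
    {S : Set V} (hS : ConnectedIn G S) (u : V) :
    (edgeBdry G (componentIn G Sᶜ u)).Subsingleton := by
  set D := componentIn G Sᶜ u
  have hout : ∀ a b, G.Adj a b → a ∈ D → b ∉ D → b ∈ S := fun a b hab ha hb => by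
    by_contra hbS
    exact hb ⟨hbS, ha.2.tail ⟨hab, ha.1, hbS⟩⟩
  rintro _ ⟨a₁, b₁, h₁, rfl, ha₁, hb₁⟩ _ ⟨a₂, b₂, h₂, rfl, ha₂, hb₂⟩
  by_contra hne
  have hbridge := isAcyclic_iff_forall_adj_isBridge.mp hG h₁
  refine isBridge_iff.mp hbridge ?_
  have hb₁S := hout _ _ h₁ ha₁ hb₁
  have hb₂S := hout _ _ h₂ ha₂ hb₂
  have ha₁a₂ := (ha₁.2.symm.trans ha₂.2).reachable_deleteEdges (Sym2.mem_mk_right a₁ b₁)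
    (not_not_intro hb₁S)
  have hb₂b₁ := (hS b₂ hb₂S b₁ hb₁S).reachable_deleteEdges (Sym2.mem_mk_left a₁ b₁) ha₁.1
  have ha₂b₂ : (G.deleteEdges {s(a₁, b₁)}).Adj a₂ b₂ :=
    deleteEdges_adj.mpr ⟨h₂, fun h => hne (Set.mem_singleton_iff.mp h).symm⟩
  exact ha₁a₂.trans (ha₂b₂.reachable.trans hb₂b₁)

lemma ncard_le_floor_inv_of_edgeBdry_subsingleton {c : ℝ} (hc : 0 < c)
    (hNA : ∀ S : Set V, S.Finite → S.Nonempty → c * (S.ncard : ℝ) ≤ ((edgeBdry G S).ncard : ℝ))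
    {D : Set V} (hD : (edgeBdry G D).Subsingleton) : D.ncard ≤ ⌊c⁻¹⌋₊ := by
  rcases D.finite_or_infinite with hfin | hinf
  · rcases D.eq_empty_or_nonempty with rfl | hne
    · simp
    refine Nat.le_floor ?_
    rw [← one_div, le_div_iff₀ hc, mul_comm]
    calc c * (D.ncard : ℝ) ≤ (edgeBdry G D).ncard := hNA D hfin hne
      _ ≤ 1 := by
        have := hD.finite.to_subtype
        exact_mod_cast Set.ncard_le_one_iff_subsingleton.mpr hD
  · simp [hinf.ncard]

lemma Set.Finite.ncard_biUnion_le_mul {ι α : Type*} {t : Set ι} (ht : t.Finite)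
    {s : ι → Set α} {n : ℕ} (hs : ∀ i ∈ t, (s i).ncard ≤ n) :
    (⋃ i ∈ t, s i).ncard ≤ t.ncard * n := by
  have hsum := ht.toFinset.set_ncard_biUnion_le s
  simp only [Set.Finite.mem_toFinset] at hsum
  rw [Set.ncard_eq_toFinset_card t ht]
  exact hsum.trans (Finset.sum_le_card_nsmul _ _ _ (by simpa using hs))

theorem statement1_general {V : Type*} (G : SimpleGraph V) (o : V) (Δ : ℕ)
    (hT : G.IsTree)
    (hdeg : ∀ v : V, (G.neighborSet v).Finite ∧ (G.neighborSet v).ncard ≤ Δ)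
    (hNA : NonAmenable G) :
    ∃ M : ℕ, CondC1 G o M := by
  obtain ⟨c, hc, hNA⟩ := hNA
  set N := ⌊c⁻¹⌋₊
  set B := Backbone G o
  have hcomp : ∀ x, (componentIn G Bᶜ x).ncard ≤ N := fun x =>
    ncard_le_floor_inv_of_edgeBdry_subsingleton hc hNA
      (hT.isAcyclic.edgeBdry_componentIn_compl_subsingleton (connectedIn_backbone G o) x)
  refine ⟨1 + (Δ + 1) * N, fun v u _ => ?_⟩
  by_cases hv : v ∈ componentIn G (Bᶜ ∪ {v}) u
  · have hnbr : (G.neighborSet v ∩ Bᶜ).ncard ≤ Δ :=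
      (Set.ncard_le_ncard Set.inter_subset_left (hdeg v).1).trans (hdeg v).2
    rw [← componentIn_eq_of_mem hv, componentIn_union_singleton_self]
    calc _ ≤ ({v} : Set V).ncard + (⋃ x ∈ G.neighborSet v ∩ Bᶜ, componentIn G Bᶜ x).ncard :=
          Set.ncard_union_le _ _
      _ ≤ 1 + (G.neighborSet v ∩ Bᶜ).ncard * N := by
          rw [Set.ncard_singleton]
          exact Nat.add_le_add_left
            (((hdeg v).1.inter_of_left _).ncard_biUnion_le_mul fun x _ => hcomp x) 1
      _ ≤ 1 + (Δ + 1) * N := by gcongr; omega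
  · rw [componentIn_union_singleton_of_notMem hv]
    exact (hcomp u).trans (le_add_left (Nat.le_mul_of_pos_left N Δ.succ_pos))

/-- A non-amenable bounded-degree infinite tree satisfies condition (C1)
for some constant `M`. -/
theorem statement1 {V : Type*} (G : SimpleGraph V) (o : V) (Δ : ℕ)
    (hT : G.IsTree) (hinf : Infinite V)
    (hdeg : ∀ v : V, (G.neighborSet v).Finite ∧ (G.neighborSet v).ncard ≤ Δ)
    (hNA : NonAmenable G) :
    ∃ M : ℕ, CondC1 G o M :=
  statement1_general G o Δ hT hdeg hNA
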